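/- Let Γ be a countably infinite group with a finite symmetric generating set S and Cayley graph 𝒢. Let ε > 0 and let K ⊆ Γ be a finite set containing a non-identity element, such that every normalized positive definite function φ : Γ → [0,1] with min_{g ∈ K} φ(g) ≥ 1 − ε does not vanish at infinity. Set d_K := max_{g ∈ K} |g|. Then for every Γ-invariant bond percolation P on 𝒢 with E[deg_ω(o)] > (1 − ε/(deg(o)·d_K))·deg(o), the two-point function τ(o,·) does not vanish at infinity, i.e., there exists c > 0 such that for every r there exist g,h ∈ Γ with d(g,h) > r and τ(g,h) ≥ c. -/

import Mathlib

/-!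
By invariance `τ(g, h) = φ(g⁻¹ h)` with `φ := τ(o, ·)`, and `φ` is positive definite: `τ(g, h)`
is the average over `ω` of the kernel `1{g ↔ h in ω}`, the indicator of an equivalence relation,
which is a sum of rank-one kernels, one per cluster. If `g = t₁ ⋯ tₙ` is a geodesic word, then
`o ↔ g` as soon as the `n` edges of the path `o, t₁, t₁t₂, …, g` are open; a union bound and
invariance give `1 - φ(g) ≤ |g| · (deg o - E[deg_ω o])`, which the degree hypothesis makes `< ε`
on `K`. So `φ` does not vanish at infinity, and points `h` far from `o` with `τ(o, h) ≥ c` exist.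
-/

open MeasureTheory Filter
open scoped ComplexOrder symmDiff

namespace InvPerc

variable {Γ : Type*} [Group Γ]

/-- Percolation configurations: indicator functions on unordered pairs of vertices. -/
abbrev Config (Γ : Type*) := Sym2 Γ → Bool

/-- The edge set of the (right) Cayley graph of `Γ` with respect to `S`. -/
def IsCayleyEdge (S : Finset Γ) (e : Sym2 Γ) : Prop :=
  ∃ g : Γ, ∃ t ∈ S, e = s(g, g * t)

/-- The action of `Γ` on configurations induced by left multiplication:
`e ∈ shift γ ω ↔ γ⁻¹ • e ∈ ω`. -/
def shift (γ : Γ) (ω : Config Γ) : Config Γ :=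
  fun e => ω (Sym2.map (fun x => γ⁻¹ * x) e)

/-- `ConnBy ω u v n` : `u` and `v` are joined by a path of at most `n` open edges of `ω`. -/
def ConnBy (ω : Config Γ) (u v : Γ) (n : ℕ) : Prop :=
  ∃ l : List Γ, l.length ≤ n ∧ List.Chain (fun a b => ω s(a, b) = true) u l ∧
    (u :: l).getLast (List.cons_ne_nil u l) = v

/-- `u` and `v` lie in the same cluster of the configuration `ω` (`u ↔ v` in `ω`). -/
def Conn (ω : Config Γ) (u v : Γ) : Prop := ∃ n : ℕ, ConnBy ω u v n

/-- The two-point function `τ(u,v) = P[u ↔ v]`. -/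
noncomputable def tpf (P : Measure (Config Γ)) (u v : Γ) : ℝ :=
  (P {ω | Conn ω u v}).toReal

/-- A `Γ`-invariant bond percolation on the Cayley graph of `(Γ, S)`: a probability
measure on configurations, supported on subsets of the Cayley edge set, invariant under
the action induced by left multiplication. -/
structure IsInvBondPerc (S : Finset Γ) (P : Measure (Config Γ)) : Prop where
  prob : IsProbabilityMeasure P
  supported : P {ω | ∀ e : Sym2 Γ, ω e = true → IsCayleyEdge S e} = 1
  invariant : ∀ γ : Γ, P.map (shift γ) = P

/-- The expected degree of the origin, `E[deg_ω(o)] = ∑_{t ∈ S} P[{o, t} ∈ ω]`. -/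
noncomputable def expDeg (S : Finset Γ) (P : Measure (Config Γ)) : ℝ :=
  ∑ t ∈ S, (P {ω : Config Γ | ω s(1, t) = true}).toReal

/-- The word length of `g` with respect to the generating set `S`. -/
noncomputable def wlen (S : Finset Γ) (g : Γ) : ℕ :=
  sInf {n : ℕ | ∃ l : List Γ, (∀ x ∈ l, x ∈ S) ∧ l.prod = g ∧ l.length = n}

/-- The word metric `d(g,h) = |g⁻¹h|`. -/
noncomputable def wdist (S : Finset Γ) (g h : Γ) : ℕ := wlen S (g⁻¹ * h)

/-- The two-point function of `P` vanishes at infinity: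
`sup {τ(g,h) : d(g,h) > r} → 0` as `r → ∞`. -/
def TpfVanishes (S : Finset Γ) (P : Measure (Config Γ)) : Prop :=
  ∀ ε : ℝ, 0 < ε → ∃ r : ℕ, ∀ g h : Γ, r < wdist S g h → tpf P g h < ε

/-- `S` is a finite symmetric generating set not containing the identity. -/
def IsSymmGen (S : Finset Γ) : Prop :=
  (1 : Γ) ∉ S ∧ (∀ t ∈ S, t⁻¹ ∈ S) ∧
    ∀ g : Γ, ∃ l : List Γ, (∀ x ∈ l, x ∈ S) ∧ l.prod = g

/-- A positive definite function on `Γ`. -/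
def IsPosDef (φ : Γ → ℂ) : Prop :=
  ∀ (n : ℕ) (g : Fin n → Γ) (a : Fin n → ℂ),
    0 ≤ ∑ i : Fin n, ∑ j : Fin n, (starRingEnd ℂ) (a i) * a j * φ ((g i)⁻¹ * g j)

/-- A conditionally negative definite function on `Γ`. -/
def IsCondNegDef (ψ : Γ → ℝ) : Prop :=
  ψ 1 = 0 ∧ (∀ g : Γ, ψ g⁻¹ = ψ g) ∧
    ∀ (n : ℕ) (g : Fin n → Γ) (a : Fin n → ℝ), (∑ i : Fin n, a i) = 0 →
      ∑ i : Fin n, ∑ j : Fin n, a i * a j * ψ ((g i)⁻¹ * g j) ≤ 0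

end InvPerc

theorem Equivalence.sum_ite_star_mul_nonneg {ι R : Type*} [Fintype ι] [NonUnitalSemiring R]
    [PartialOrder R] [StarRing R] [StarOrderedRing R] {r : ι → ι → Prop} [DecidableRel r]
    (hr : Equivalence r) (a : ι → R) :
    0 ≤ ∑ i, ∑ j, if r i j then star (a i) * a j else 0 := by
  classical
  let s : Setoid ι := ⟨r, hr⟩
  let blockSum : Quotient s → R := fun k => ∑ i with ⟦i⟧ = k, a i
  have hblocks : ∑ i, ∑ j, (if r i j then star (a i) * a j else 0)
      = ∑ k, star (blockSum k) * blockSum k := calc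
    _ = ∑ i, ∑ j with ⟦j⟧ = (⟦i⟧ : Quotient s), star (a i) * a j := by
      refine Finset.sum_congr rfl fun i _ => ?_
      rw [Finset.sum_filter]
      exact Finset.sum_congr rfl fun j _ =>
        if_congr (Quotient.eq.trans ⟨hr.symm, hr.symm⟩).symm rfl rfl
    _ = ∑ k, ∑ i with ⟦i⟧ = k, ∑ j with ⟦j⟧ = k, star (a i) * a j := by
      rw [← Finset.sum_fiberwise Finset.univ (fun i => (⟦i⟧ : Quotient s))]
      refine Finset.sum_congr rfl fun k _ => Finset.sum_congr rfl fun i hi => ?_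
      rw [(Finset.mem_filter.1 hi).2]
    _ = ∑ k, star (blockSum k) * blockSum k := by
      simp only [blockSum, star_sum, Finset.sum_mul_sum]
  rw [hblocks]
  exact Finset.sum_nonneg fun k _ => star_mul_self_nonneg _

open scoped Pointwise in
theorem Finset.list_prod_mem_pow {M : Type*} [Monoid M] [DecidableEq M] {s : Finset M} :
    ∀ {l : List M}, (∀ x ∈ l, x ∈ s) → l.prod ∈ s ^ l.length
  | [], _ => by simp
  | a :: l, hl => by
    rw [List.prod_cons, List.length_cons, pow_succ']
    exact Finset.mul_mem_mul (hl a List.mem_cons_self)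
      (list_prod_mem_pow fun x hx => hl x (List.mem_cons_of_mem a hx))

theorem mul_sub_lt_of_one_sub_div_mul_mul_lt {n x d ε : ℝ} (hx : x ≤ n) (hd : 0 ≤ d)
    (h : (1 - ε / (n * d)) * n < x) : d * (n - x) < ε := by
  -- if `n * d = 0` then `ε / (n * d) = 0`, and `h` contradicts `hx`
  rcases hd.eq_or_lt with rfl | hd
  · simp at h; linarith
  rcases eq_or_ne n 0 with rfl | hn
  · simp at h; linarith
  have hgap : n - x < ε / d := by
    have : (1 - ε / (n * d)) * n = n - ε / d := by field_simp
    linarith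
  calc d * (n - x) < d * (ε / d) := by gcongr
    _ = ε := by field_simp

namespace InvPerc

section Clusters

variable {Γ : Type*} (ω : Config Γ) {P : Measure (Config Γ)}

theorem conn_iff_reflTransGen (u v : Γ) :
    Conn ω u v ↔ Relation.ReflTransGen (fun a b => ω s(a, b) = true) u v := by
  constructor
  · rintro ⟨-, l, -, hchain, hlast⟩
    exact List.relationReflTransGen_of_exists_isChain_cons l hchain hlast
  · intro h
    obtain ⟨l, hchain, hlast⟩ := List.exists_isChain_cons_of_relationReflTransGen h
    exact ⟨l.length, l, le_rfl, hchain, hlast⟩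

theorem conn_equivalence : Equivalence (Conn ω) := by
  have hswap : Function.swap (fun a b : Γ => ω s(a, b) = true) = fun a b => ω s(a, b) = true := by
    ext a b; simp [Function.swap, Sym2.eq_swap]
  refine ⟨fun u => (conn_iff_reflTransGen ω u u).2 .refl, fun h => ?_, fun h h' => ?_⟩
  · rw [conn_iff_reflTransGen] at h ⊢
    exact Relation.reflTransGen_swap.1 (hswap ▸ h)
  · rw [conn_iff_reflTransGen] at h h' ⊢
    exact h.trans h'

theorem Conn.head {ω : Config Γ} {u v w : Γ} (huv : ω s(u, v) = true) (hvw : Conn ω v w) :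
    Conn ω u w := by
  rw [conn_iff_reflTransGen] at hvw ⊢
  exact hvw.head huv

theorem measurableSet_setOf_apply_eq (e : Sym2 Γ) (b : Bool) :
    MeasurableSet {ω : Config Γ | ω e = b} :=
  (measurableSet_singleton b).preimage (measurable_pi_apply e)

theorem measurableSet_isChain :
    ∀ l : List Γ, MeasurableSet {ω : Config Γ | l.IsChain fun a b => ω s(a, b) = true}
  | [] => by simp
  | [_] => by simp
  | a :: b :: l => by
    simp only [List.isChain_cons_cons, Set.ofPred_and]
    exact (measurableSet_setOf_apply_eq _ _).inter (measurableSet_isChain (b :: l))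

theorem measurableSet_conn [Countable Γ] (u v : Γ) : MeasurableSet {ω : Config Γ | Conn ω u v} := by
  have hconn : {ω : Config Γ | Conn ω u v} = ⋃ (l : List Γ)
      (_ : (u :: l).getLast (List.cons_ne_nil u l) = v),
        {ω : Config Γ | (u :: l).IsChain fun a b => ω s(a, b) = true} := by
    ext ω
    simp only [Set.mem_ofPred_eq, Set.mem_iUnion, Conn, ConnBy]
    exact ⟨fun ⟨_, l, _, hchain, hlast⟩ => ⟨l, hlast, hchain⟩,
      fun ⟨l, hlast, hchain⟩ => ⟨l.length, l, le_rfl, hchain, hlast⟩⟩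
  rw [hconn]
  exact .iUnion fun l => .iUnion fun _ => measurableSet_isChain _

theorem tpf_nonneg (u v : Γ) : 0 ≤ tpf P u v := measureReal_nonneg

theorem tpf_le_one [IsProbabilityMeasure P] (u v : Γ) : tpf P u v ≤ 1 := measureReal_le_one

theorem tpf_self [IsProbabilityMeasure P] (u : Γ) : tpf P u u = 1 := by
  simp [tpf, (conn_equivalence _).refl]

end Clusters

section Invariant

variable {Γ : Type*} [Group Γ] {P : Measure (Config Γ)}

theorem conn_shift_mul_iff (ω : Config Γ) (γ u v : Γ) :
    Conn (shift γ ω) (γ * u) (γ * v) ↔ Conn ω u v := by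
  simp only [conn_iff_reflTransGen]
  constructor
  · intro h
    simpa [Function.onFun] using Relation.ReflTransGen.lift (p := fun a b => ω s(a, b) = true)
      (γ⁻¹ * ·) (fun a b hab => by simpa [shift] using hab) _ _ h
  · exact Relation.ReflTransGen.lift (γ * ·)
      (fun a b hab => by simpa [Function.onFun, shift] using hab) _ _

theorem measurable_shift (γ : Γ) : Measurable (shift γ : Config Γ → Config Γ) :=
  measurable_pi_lambda _ fun _ => measurable_pi_apply _

theorem measureReal_shift_preimage (hinv : ∀ γ : Γ, P.map (shift γ) = P)
    (γ : Γ) {A : Set (Config Γ)} (hA : MeasurableSet A) : P.real (shift γ ⁻¹' A) = P.real A := by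
  rw [← map_measureReal_apply (measurable_shift γ) hA, hinv]

theorem tpf_mul_left [Countable Γ] (hinv : ∀ γ : Γ, P.map (shift γ) = P) (γ u v : Γ) :
    tpf P (γ * u) (γ * v) = tpf P u v := by
  have hpre : shift γ ⁻¹' {ω | Conn ω (γ * u) (γ * v)} = {ω | Conn ω u v} := by
    ext ω
    exact conn_shift_mul_iff ω γ u v
  rw [tpf, tpf, ← measureReal_def, ← measureReal_def, ← hpre,
    measureReal_shift_preimage hinv γ (measurableSet_conn _ _)]

theorem tpf_eq_tpf_one_inv_mul [Countable Γ] (hinv : ∀ γ : Γ, P.map (shift γ) = P) (g h : Γ) :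
    tpf P g h = tpf P 1 (g⁻¹ * h) := by
  simpa using tpf_mul_left hinv g 1 (g⁻¹ * h)

theorem isPosDef_tpf [Countable Γ] [IsFiniteMeasure P] (hinv : ∀ γ : Γ, P.map (shift γ) = P) :
    IsPosDef fun g => (tpf P 1 g : ℂ) := by
  classical
  intro n g a
  have hint : ∀ i j, Integrable
      (fun ω => if Conn ω (g i) (g j) then star (a i) * a j else 0) P := fun i j =>
    (integrable_const (star (a i) * a j)).indicator (measurableSet_conn (g i) (g j))
  calc 0 ≤ ∫ ω, ∑ i, ∑ j, (if Conn ω (g i) (g j) then star (a i) * a j else 0) ∂P :=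
        integral_nonneg fun ω => ((conn_equivalence ω).comap g).sum_ite_star_mul_nonneg a
    _ = _ := by
      rw [integral_finsetSum _ fun i _ => integrable_finsetSum _ fun j _ => hint i j]
      refine Finset.sum_congr rfl fun i _ => ?_
      rw [integral_finsetSum _ fun j _ => hint i j]
      refine Finset.sum_congr rfl fun j _ => ?_
      show _ = _ * ((tpf P 1 ((g i)⁻¹ * g j) : ℝ) : ℂ)
      rw [← tpf_eq_tpf_one_inv_mul hinv, starRingEnd_apply,
        mul_comm (_ * _), ← Complex.real_smul]
      exact integral_indicator_const _ (measurableSet_conn (g i) (g j))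

theorem measureReal_edge_mul_eq (hinv : ∀ γ : Γ, P.map (shift γ) = P) (x t : Γ) (b : Bool) :
    P.real {ω | ω s(x, x * t) = b} = P.real {ω | ω s(1, t) = b} := by
  rw [← measureReal_shift_preimage hinv x⁻¹ (A := {ω | ω s(1, t) = b})
    (measurableSet_setOf_apply_eq _ _)]
  congr 1
  ext ω
  simp [shift]

theorem measureReal_not_conn_mul_prod_le [Countable Γ] [IsFiniteMeasure P]
    (hinv : ∀ γ : Γ, P.map (shift γ) = P) (x : Γ) (l : List Γ) :
    P.real {ω | ¬ Conn ω x (x * l.prod)} ≤ (l.map fun t => P.real {ω | ω s(1, t) = false}).sum := by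
  induction l generalizing x with
  | nil => simp [(conn_equivalence _).refl]
  | cons t l ih =>
    have hsub : {ω | ¬ Conn ω x (x * (t :: l).prod)} ⊆
        {ω | ω s(x, x * t) = false} ∪ {ω | ¬ Conn ω (x * t) (x * t * l.prod)} := by
      intro ω hω
      by_contra hopen
      simp only [Set.mem_union, Set.mem_ofPred_eq, Bool.not_eq_false, not_or, not_not] at hω hopen
      exact hω (by simpa [mul_assoc] using Conn.head hopen.1 hopen.2)
    calc _ ≤ _ := measureReal_mono hsub
      _ ≤ _ := measureReal_union_le _ _
      _ ≤ _ := by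
        rw [measureReal_edge_mul_eq hinv, List.map_cons, List.sum_cons]
        gcongr
        exact ih (x * t)

theorem sum_measureReal_closed_eq_card_sub_expDeg [IsProbabilityMeasure P] (S : Finset Γ) :
    ∑ t ∈ S, P.real {ω | ω s(1, t) = false} = S.card - expDeg S P := by
  have hclosed : ∀ t : Γ, P.real {ω | ω s(1, t) = false} = 1 - P.real {ω | ω s(1, t) = true} := by
    intro t
    rw [← probReal_compl_eq_one_sub (measurableSet_setOf_apply_eq _ _)]
    congr 1
    ext ω
    simp
  simp [hclosed, expDeg, measureReal_def]

theorem expDeg_le_card [IsProbabilityMeasure P] (S : Finset Γ) : expDeg S P ≤ S.card := by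
  rw [← sub_nonneg, ← sum_measureReal_closed_eq_card_sub_expDeg]
  exact Finset.sum_nonneg fun _ _ => measureReal_nonneg

theorem exists_list_prod_eq_length_eq_wlen {S : Finset Γ} (hS : IsSymmGen S) (g : Γ) :
    ∃ l : List Γ, (∀ x ∈ l, x ∈ S) ∧ l.prod = g ∧ l.length = wlen S g := by
  obtain ⟨l, hlS, hprod⟩ := hS.2.2 g
  exact Nat.sInf_mem (s := {n | ∃ l : List Γ, (∀ x ∈ l, x ∈ S) ∧ l.prod = g ∧ l.length = n})
    ⟨l.length, l, hlS, hprod, rfl⟩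

theorem one_sub_tpf_le [Countable Γ] [IsProbabilityMeasure P] {S : Finset Γ} (hS : IsSymmGen S)
    (hinv : ∀ γ : Γ, P.map (shift γ) = P) (g : Γ) :
    1 - tpf P 1 g ≤ wlen S g * (S.card - expDeg S P) := by
  obtain ⟨l, hlS, rfl, hlen⟩ := exists_list_prod_eq_length_eq_wlen hS g
  let closed : Γ → ℝ := fun t => P.real {ω | ω s(1, t) = false}
  calc 1 - tpf P 1 l.prod = P.real {ω | ¬ Conn ω 1 l.prod} :=
        (probReal_compl_eq_one_sub (measurableSet_conn _ _)).symm
    _ ≤ (l.map closed).sum := by simpa using measureReal_not_conn_mul_prod_le hinv 1 l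
    _ ≤ l.length • ∑ t ∈ S, closed t := by
        rw [← List.length_map closed]
        refine List.sum_le_card_nsmul _ _ fun c hc => ?_
        obtain ⟨t, ht, rfl⟩ := List.mem_map.1 hc
        exact Finset.single_le_sum (f := closed) (fun _ _ => measureReal_nonneg) (hlS t ht)
    _ = wlen S l.prod * (S.card - expDeg S P) := by
        rw [nsmul_eq_mul, hlen, sum_measureReal_closed_eq_card_sub_expDeg]

end Invariant

open scoped Pointwise in
theorem finite_setOf_wlen_le {Γ : Type*} [Group Γ] {S : Finset Γ} (hS : IsSymmGen S) (r : ℕ) :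
    {g : Γ | wlen S g ≤ r}.Finite := by
  classical
  refine ((Set.finite_Iic r).biUnion fun k _ => (S ^ k).finite_toSet).subset fun g hg => ?_
  obtain ⟨l, hlS, rfl, hlen⟩ := exists_list_prod_eq_length_eq_wlen hS g
  exact Set.mem_biUnion (x := l.length) (hlen ▸ hg) (Finset.list_prod_mem_pow hlS)

theorem weak_kazhdan_threshold_general {Γ : Type*} [Group Γ] [Countable Γ]
    (S : Finset Γ) (hS : IsSymmGen S)
    (ε : ℝ) (K : Finset Γ)
    (hpair : ∀ φ : Γ → ℝ,
      (∀ g : Γ, 0 ≤ φ g ∧ φ g ≤ 1) → φ 1 = 1 → IsPosDef (fun g => (φ g : ℂ)) →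
      (∀ g ∈ K, 1 - ε ≤ φ g) →
      ¬ (∀ c : ℝ, 0 < c → {g : Γ | c ≤ |φ g|}.Finite))
    (dK : ℕ) (hdK : dK = K.sup (wlen S))
    (P : Measure (Config Γ)) (hP : IsInvBondPerc S P)
    (hdeg : expDeg S P > (1 - ε / ((S.card : ℝ) * (dK : ℝ))) * (S.card : ℝ)) :
    ∃ c : ℝ, 0 < c ∧ ∀ r : ℕ, ∃ g h : Γ, r < wdist S g h ∧ c ≤ tpf P g h := by
  have := hP.prob
  have hdeg_le := expDeg_le_card (P := P) S
  have hgap : dK * (S.card - expDeg S P) < ε :=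
    mul_sub_lt_of_one_sub_div_mul_mul_lt hdeg_le dK.cast_nonneg hdeg
  have hK : ∀ g ∈ K, 1 - ε ≤ tpf P 1 g := by
    intro g hg
    have hlen : (wlen S g : ℝ) ≤ dK := by rw [hdK]; exact_mod_cast Finset.le_sup hg
    linarith [one_sub_tpf_le hS hP.invariant g,
      mul_le_mul_of_nonneg_right hlen (sub_nonneg.2 hdeg_le)]
  obtain ⟨c, hc⟩ := not_forall.1 <| hpair (tpf P 1) (fun g => ⟨tpf_nonneg 1 g, tpf_le_one 1 g⟩)
    (tpf_self 1) (isPosDef_tpf hP.invariant) hK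
  obtain ⟨hc, hinf⟩ := Classical.not_imp.1 hc
  refine ⟨c, hc, fun r => ?_⟩
  obtain ⟨h, hch, hfar⟩ := (Set.Infinite.sdiff hinf (finite_setOf_wlen_le hS r)).nonempty
  exact ⟨1, h, by simpa [wdist] using hfar, hch.trans_eq (abs_of_nonneg (tpf_nonneg 1 h))⟩

/-- let `(ε, K)` be such that every normalized positive definite function
`φ : Γ → [0,1]` with `min_{g ∈ K} φ(g) ≥ 1 - ε` does not vanish at infinity. Then every
`Γ`-invariant bond percolation with `E[deg_ω(o)] > (1 - ε/(deg(o)·d_K))·deg(o)` has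
two-point function not vanishing at infinity. -/
theorem weak_kazhdan_threshold {Γ : Type*} [Group Γ] [Countable Γ] [Infinite Γ]
    (S : Finset Γ) (hS : IsSymmGen S)
    (ε : ℝ) (hε : 0 < ε) (K : Finset Γ) (hK : ∃ g ∈ K, g ≠ 1)
    (hpair : ∀ φ : Γ → ℝ,
      (∀ g : Γ, 0 ≤ φ g ∧ φ g ≤ 1) → φ 1 = 1 → IsPosDef (fun g => (φ g : ℂ)) →
      (∀ g ∈ K, 1 - ε ≤ φ g) →
      ¬ (∀ c : ℝ, 0 < c → {g : Γ | c ≤ |φ g|}.Finite))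
    (dK : ℕ) (hdK : dK = K.sup (wlen S))
    (P : Measure (Config Γ)) (hP : IsInvBondPerc S P)
    (hdeg : expDeg S P > (1 - ε / ((S.card : ℝ) * (dK : ℝ))) * (S.card : ℝ)) :
    ∃ c : ℝ, 0 < c ∧ ∀ r : ℕ, ∃ g h : Γ, r < wdist S g h ∧ c ≤ tpf P g h :=
  weak_kazhdan_threshold_general S hS ε K hpair dK hdK P hP hdeg

end InvPerc
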